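/- arXiv:1203.2369 — 2 statements merged into one kernel-verified Lean document; each statement's English description precedes it below -/
import Mathlib

section
/- For a Galton-Watson branching process where each branching event produces k offspring (k ≠ 1 fixed), starting from one particle, with offspring distribution concentrated at k, if ω denotes the number of branching events up to time T and branchings occur at rate β per particle, then the Laplace transform E[e^{-c ω}] equals e^{c/(k-1)} / (1 - e^{βT(k-1)} + e^{c + βT(k-1)})^{1/(k-1)}. -/
/-!
Solving the renewal recurrence by induction gives the negative binomial law
`P t n = multichoose (1/(k-1)) n · e^{-βt} (1 - e^{-β(k-1)t})^n`, so the Laplace transform is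
`e^{-βT}` times the binomial series `∑ multichoose a n xⁿ = (1 - x)^{-a}` at
`x = (1 - e^{-β(k-1)T}) e^{-c}`. For `k = 0` this series is the polynomial `1 - x`; for `k ≥ 2` its
coefficients are positive and decay only like `1/n`, so summability forces `x < 1`, inside the
disc of convergence.
-/

open Real

theorem Ring.succ_mul_multichoose_succ {R : Type*} [CommRing R] [BinomialRing R] (a : R) (n : ℕ) :
    ((n : R) + 1) * Ring.multichoose a (n + 1) = (a + n) * Ring.multichoose a n := by
  have := BinomialRing.toIsAddTorsionFree (R := R)
  apply nsmul_right_injective (Nat.factorial_ne_zero n)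
  dsimp only
  rw [← Nat.cast_succ, ← nsmul_eq_mul, smul_smul, mul_comm, ← Nat.factorial_succ, ← mul_smul_comm,
    Ring.factorial_nsmul_multichoose_eq_ascPochhammer,
    Ring.factorial_nsmul_multichoose_eq_ascPochhammer, Polynomial.ascPochhammer_smeval_eq_eval,
    Polynomial.ascPochhammer_smeval_eq_eval, ascPochhammer_succ_eval, mul_comm]

namespace Real

theorem hasSum_multichoose_mul_pow (a : ℝ) {x : ℝ} (hx : |x| < 1) :
    HasSum (fun n ↦ Ring.multichoose a n * x ^ n) (1 / (1 - x) ^ a) := by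
  have hx' : x ∈ Metric.eball (0 : ℝ) 1 := by
    rw [Metric.mem_eball, edist_zero_right, ← ofReal_norm, norm_eq_abs]
    exact_mod_cast (ENNReal.ofReal_lt_one.mpr hx)
  simpa [Ring.multichoose_eq, FormalMultilinearSeries.ofScalars_apply_eq, mul_comm]
    using (one_div_one_sub_rpow_hasFPowerSeriesOnBall_zero a).hasSum hx'

theorem multichoose_pos {a : ℝ} (ha : 0 < a) (n : ℕ) : 0 < Ring.multichoose a n := by
  have h := Ring.factorial_nsmul_multichoose_eq_ascPochhammer a n
  rw [nsmul_eq_mul, Polynomial.ascPochhammer_smeval_eq_eval] at h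
  exact pos_of_mul_pos_right (h ▸ ascPochhammer_pos n a ha) (Nat.cast_nonneg _)

theorem le_succ_mul_multichoose_succ {a : ℝ} (ha : 0 < a) (n : ℕ) :
    a ≤ (n + 1) * Ring.multichoose a (n + 1) := by
  induction n with
  | zero => simp
  | succ n ih =>
    have hrec := Ring.succ_mul_multichoose_succ a (n + 1)
    push_cast at hrec ⊢
    nlinarith [multichoose_pos ha (n + 1)]

theorem not_summable_multichoose_mul_pow {a x : ℝ} (ha : 0 < a) (hx : 1 ≤ x) :
    ¬ Summable (fun n ↦ Ring.multichoose a n * x ^ n) := by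
  intro hsum
  refine not_summable_one_div_natCast ((summable_mul_left_iff ha.ne').mp ?_)
  refine hsum.of_nonneg_of_le (fun n ↦ by positivity) fun n ↦ ?_
  rcases n with _ | n
  · simp
  · calc a * (1 / ((n + 1 : ℕ) : ℝ)) ≤ Ring.multichoose a (n + 1) := by
          rw [mul_one_div, div_le_iff₀ (by positivity), mul_comm]
          exact_mod_cast le_succ_mul_multichoose_succ ha n
      _ ≤ Ring.multichoose a (n + 1) * x ^ (n + 1) :=
          le_mul_of_one_le_right (multichoose_pos ha _).le (one_le_pow₀ hx)

theorem hasSum_multichoose_neg_one_mul_pow (x : ℝ) :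
    HasSum (fun n ↦ Ring.multichoose (-1 : ℝ) n * x ^ n) (1 - x) := by
  have hvanish : ∀ n, Ring.multichoose (-1 : ℝ) (n + 2) = 0 := fun n ↦ by
    have h := Ring.map_multichoose (Int.castRingHom ℝ) (-((1 : ℕ) : ℤ)) (n + 2)
    rwa [Ring.multichoose_neg_of_lt 1 (n + 2) (by omega), map_zero, eq_comm, map_neg,
      map_natCast, Nat.cast_one] at h
  have h : HasSum (fun n ↦ Ring.multichoose (-1 : ℝ) n * x ^ n)
      (∑ n ∈ Finset.range 2, Ring.multichoose (-1 : ℝ) n * x ^ n) :=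
    hasSum_sum_of_ne_finset_zero fun n hn ↦ by
      obtain ⟨m, rfl⟩ : ∃ m, n = m + 2 := ⟨n - 2, by simp at hn; omega⟩
      simp [hvanish]
  simpa [Finset.sum_range_succ, ← sub_eq_add_neg] using h

end Real

theorem integral_exp_mul_mul_exp_mul_sub_one_pow {a : ℝ} (ha : a ≠ 0) (n : ℕ) (t : ℝ) :
    ∫ s in (0 : ℝ)..t, exp (a * s) * (exp (a * s) - 1) ^ n
      = (exp (a * t) - 1) ^ (n + 1) / (a * (n + 1)) := by
  have hderiv : ∀ s : ℝ, HasDerivAt (fun u ↦ (exp (a * u) - 1) ^ (n + 1) / (a * (n + 1)))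
      (exp (a * s) * (exp (a * s) - 1) ^ n) s := by
    intro s
    refine ((((hasDerivAt_id s).const_mul a).exp.sub_const 1).pow (n + 1)).div_const
      (a * (n + 1)) |>.congr_deriv ?_
    simp only [id, mul_one, Nat.add_sub_cancel, Nat.cast_add, Nat.cast_one]
    field_simp
  rw [intervalIntegral.integral_eq_sub_of_hasDerivAt (fun s _ ↦ hderiv s)
    (by apply Continuous.intervalIntegrable; fun_prop)]
  simp

theorem one_sub_exp_neg_pow (y : ℝ) (n : ℕ) :
    (1 - exp (-y)) ^ n = exp (-(n * y)) * (exp y - 1) ^ n := by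
  have h : 1 - exp (-y) = exp (-y) * (exp y - 1) := by
    rw [mul_sub, ← exp_add, neg_add_cancel, exp_zero, mul_one]
  rw [h, mul_pow, ← exp_nat_mul, mul_neg]

theorem eq_multichoose_of_renewal {β k : ℝ} (hβ : β ≠ 0) (hk : k ≠ 1) {P : ℝ → ℕ → ℝ}
    (hP0 : ∀ t, P t 0 = exp (-β * t))
    (hPrec : ∀ (t : ℝ) (n : ℕ), P t (n + 1) = β * ∫ s in (0 : ℝ)..t,
      P s n * ((k - 1) * n + 1) * exp (-β * k * (t - s))
        * exp (-β * (t - s) * ((k - 1) * n + 1 - 1)))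
    (n : ℕ) (t : ℝ) :
    P t n = Ring.multichoose (k - 1)⁻¹ n * exp (-β * t) * (1 - exp (-(β * (k - 1) * t))) ^ n := by
  have hκ : k - 1 ≠ 0 := sub_ne_zero.mpr hk
  induction n generalizing t with
  | zero => simp [hP0]
  | succ n ih =>
    have hintegrand : ∀ s, P s n * ((k - 1) * n + 1) * exp (-β * k * (t - s))
        * exp (-β * (t - s) * ((k - 1) * n + 1 - 1))
        = Ring.multichoose (k - 1)⁻¹ n * ((k - 1) * n + 1)
          * exp (-(β * ((k - 1) * (n + 1) + 1) * t))
          * (exp (β * (k - 1) * s) * (exp (β * (k - 1) * s) - 1) ^ n) := by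
      intro s
      have hexp : exp (-β * s) * exp (-(n * (β * (k - 1) * s))) * exp (-β * k * (t - s))
          * exp (-β * (t - s) * ((k - 1) * n + 1 - 1))
          = exp (-(β * ((k - 1) * (n + 1) + 1) * t)) * exp (β * (k - 1) * s) := by
        simp only [← exp_add]
        ring_nf
      rw [ih, one_sub_exp_neg_pow]
      linear_combination (Ring.multichoose (k - 1)⁻¹ n * ((k - 1) * n + 1)
        * (exp (β * (k - 1) * s) - 1) ^ n) * hexp
    have hexponent : -β * t + -(↑(n + 1) * (β * (k - 1) * t))
        = -(β * ((k - 1) * (n + 1) + 1) * t) := by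
      push_cast; ring
    -- this recurrence turns the prefactor `((k-1)n+1) / ((k-1)(n+1))` into the next coefficient
    have hrec := Ring.succ_mul_multichoose_succ (k - 1)⁻¹ n
    rw [hPrec, intervalIntegral.integral_congr fun s _ ↦ hintegrand s,
      intervalIntegral.integral_const_mul,
      integral_exp_mul_mul_exp_mul_sub_one_pow (mul_ne_zero hβ hκ), one_sub_exp_neg_pow,
      mul_assoc (Ring.multichoose _ (n + 1)), ← mul_assoc (exp (-β * t)), ← exp_add, hexponent]
    field_simp
    rw [one_div]
    linear_combination (-(k - 1) * (exp (β * (k - 1) * t) - 1) ^ (n + 1)) * hrec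
      - (Ring.multichoose (k - 1)⁻¹ n * (exp (β * (k - 1) * t) - 1) ^ (n + 1))
        * mul_inv_cancel₀ hκ

theorem exp_neg_mul_div_one_sub_rpow {β T c κ : ℝ} (hκ : κ ≠ 0)
    (hx : 0 < 1 - (1 - exp (-(β * κ * T))) * exp (-c)) :
    exp (-β * T) * (1 / (1 - (1 - exp (-(β * κ * T))) * exp (-c)) ^ κ⁻¹)
      = exp (c / κ) / (1 - exp (β * T * κ) + exp (c + β * T * κ)) ^ (1 / κ) := by
  set D := 1 - exp (β * T * κ) + exp (c + β * T * κ)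
  have hD : 1 - (1 - exp (-(β * κ * T))) * exp (-c) = D * exp (-(c + β * T * κ)) := by
    simp only [D, add_mul, sub_mul, one_mul, ← exp_add, add_neg_cancel, exp_zero]
    ring_nf
  have hDpos : 0 < D := by
    rw [hD] at hx
    exact pos_of_mul_pos_left hx (exp_pos _).le
  rw [hD, mul_rpow hDpos.le (exp_pos _).le, ← exp_mul, one_div κ]
  have : -(c + β * T * κ) * κ⁻¹ = -β * T - c / κ := by field_simp; ring
  rw [this, exp_sub]
  field_simp

open MeasureTheory

/-- Laplace transform of the number of branching events for a single-type
(k offspring, k ≠ 1) continuous-time Galton-Watson process with rate β.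
The distribution `P T n` of the number of branchings on `[0,T]` is
characterized by the renewal recurrence (last-branching decomposition). -/
theorem stmt_0
    (β T c : ℝ) (hβ : 0 < β) (hT : 0 < T)
    (k : ℕ) (hk : k ≠ 1)
    (P : ℝ → ℕ → ℝ)
    (hP0 : ∀ t : ℝ, P t 0 = Real.exp (-β * t))
    (hPrec : ∀ (t : ℝ) (n : ℕ),
      P t (n + 1)
        = β * ∫ s in (0:ℝ)..t,
            P s n * ((k - 1 : ℝ) * n + 1)
              * Real.exp (-β * k * (t - s))
              * Real.exp (-β * (t - s) * ((k - 1 : ℝ) * n + 1 - 1)))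
    (hSummable : Summable (fun n : ℕ => P T n * Real.exp (-c * n))) :
    ∑' n : ℕ, P T n * Real.exp (-c * n)
      = Real.exp (c / ((k : ℝ) - 1))
          / (1 - Real.exp (β * T * ((k : ℝ) - 1))
              + Real.exp (c + β * T * ((k : ℝ) - 1))) ^ ((1 : ℝ) / ((k : ℝ) - 1)) := by
  have hk' : (k : ℝ) ≠ 1 := by exact_mod_cast hk
  set x := (1 - exp (-(β * ((k : ℝ) - 1) * T))) * exp (-c) with hx
  have hterm : ∀ n : ℕ, P T n * exp (-c * n)
      = exp (-β * T) * (Ring.multichoose ((k : ℝ) - 1)⁻¹ n * x ^ n) := fun n ↦ by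
    rw [eq_multichoose_of_renewal hβ.ne' hk' hP0 hPrec, hx, mul_pow, mul_comm (-c), exp_nat_mul]
    ring
  have hseries : 0 < 1 - x ∧
      HasSum (fun n ↦ Ring.multichoose ((k : ℝ) - 1)⁻¹ n * x ^ n)
        (1 / (1 - x) ^ ((k : ℝ) - 1)⁻¹) := by
    rcases Nat.lt_or_ge k 1 with hk0 | hk2
    · obtain rfl : k = 0 := by omega
      have hx0 : x < 0 := mul_neg_of_neg_of_pos
        (by simpa [mul_comm β] using mul_pos hβ hT) (exp_pos _)
      refine ⟨by linarith, ?_⟩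
      norm_num [rpow_neg_one]
      exact hasSum_multichoose_neg_one_mul_pow x
    · have hκ : (0 : ℝ) < k - 1 := by
        rw [sub_pos]; exact_mod_cast (show 1 < k by omega)
      have hx0 : 0 ≤ x := mul_nonneg (by simp; positivity) (exp_pos _).le
      have hx1 : x < 1 := by
        by_contra! h
        exact not_summable_multichoose_mul_pow (inv_pos.mpr hκ) h
          ((summable_mul_left_iff (exp_ne_zero _)).mp (hSummable.congr hterm))
      exact ⟨by linarith, hasSum_multichoose_mul_pow _ (abs_lt.mpr ⟨by linarith, hx1⟩)⟩
  rw [tsum_congr hterm, tsum_mul_left, hseries.2.tsum_eq]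
  exact exp_neg_mul_div_one_sub_rpow (sub_ne_zero.mpr hk') hseries.1
end

section
/- One-step unbiasedness of the branching estimator for a polynomial in expectations (PDE1 case): let τ ~ Exp(λ) independent of X, let F(x) = Σ_{k=0}^M a_k x^k, and define the estimator: if τ ≥ T output ψ(X_T); if τ < T, draw K with P(K = k) = p_k (p_k > 0 whenever a_k ≠ 0), run K independent copies of X from (τ, X_τ) to T, and output (a_K/p_K) ∏_{j=1}^K ψ(X_T^{(j)}). Then the expectation of this estimator equals E[1_{τ≥T} ψ(X_T)] + E[1_{τ<T} F(E_{τ,X_τ}[ψ(X_T)])]. -/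
/-!
Conditionally on `(τ, X_τ)` the `K` copies are i.i.d. with law `ν τ X_τ`, so by Fubini the
expectation of their product `∏ ψ(X_T^{(j)})` is the `k`-th power of `m = ∫ ψ dν`; averaging
over `K` with weights `p_k` then cancels the factor `1 / p_k`, leaving `∑ a_k m^k = F(m)`.
-/

open MeasureTheory

lemma Finset.sum_mul_div_mul_eq_sum_mul {ι R : Type*} [Field R] (s : Finset ι)
    (p a x : ι → R) (hpa : ∀ k, p k = 0 → a k = 0) :
    ∑ k ∈ s, p k * (a k / p k * x k) = ∑ k ∈ s, a k * x k :=
  Finset.sum_congr rfl fun k _ => by rw [← mul_assoc, mul_div_cancel_of_imp' (hpa k)]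

lemma sum_mul_div_mul_integral_pi_prod_eq_sum_mul_pow {E : Type*} [MeasurableSpace E]
    (m : Measure E) [SigmaFinite m] (ψ : E → ℝ) {N : ℕ} (a p : Fin N → ℝ)
    (hpa : ∀ k, p k = 0 → a k = 0) :
    ∑ k, p k * (a k / p k * ∫ z : Fin k → E, ∏ j, ψ (z j) ∂(Measure.pi fun _ => m))
      = ∑ k, a k * (∫ y, ψ y ∂m) ^ (k : ℕ) := by
  simp only [integral_fintype_prod_eq_pow, Fintype.card_fin]
  exact Finset.sum_mul_div_mul_eq_sum_mul _ p a _ hpa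

theorem stmt_19_general {Ω E : Type*} [MeasurableSpace Ω] [MeasurableSpace E]
    (μ : Measure Ω)
    (M : ℕ) (T : ℝ) (a p : Fin (M + 1) → ℝ)
    (hpa : ∀ k, a k ≠ 0 → 0 < p k)
    (τ : Ω → ℝ) (XT Xτ : Ω → E)
    (ν : ℝ → E → Measure E)
    [inst : ∀ t y, SigmaFinite (ν t y)]
    (ψ : E → ℝ)
    (hInt1 : Integrable (fun ω => if T ≤ τ ω then ψ (XT ω) else 0) μ)
    (hInt2 : Integrable (fun ω => if τ ω < T then
        ∑ k, a k * (∫ y, ψ y ∂(ν (τ ω) (Xτ ω))) ^ (k : ℕ) else 0) μ) :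
    ∫ ω, (if T ≤ τ ω then ψ (XT ω)
        else ∑ k, p k * ((a k / p k) *
          ∫ z : Fin (k : ℕ) → E, ∏ j, ψ (z j)
            ∂(Measure.pi fun _ => ν (τ ω) (Xτ ω)))) ∂μ
      = (∫ ω, (if T ≤ τ ω then ψ (XT ω) else 0) ∂μ)
        + ∫ ω, (if τ ω < T then
            ∑ k, a k * (∫ y, ψ y ∂(ν (τ ω) (Xτ ω))) ^ (k : ℕ) else 0) ∂μ := by
  have hpa' : ∀ k, p k = 0 → a k = 0 := fun k hk => by_contra fun ha => (hpa k ha).ne' hk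
  rw [← integral_add hInt1 hInt2]
  congr 1 with ω
  by_cases h : T ≤ τ ω
  · simp [h]
  · simp only [h, if_false, not_le.mp h, if_true, zero_add]
    exact sum_mul_div_mul_integral_pi_prod_eq_sum_mul_pow _ ψ a p hpa'

/-- One-step unbiasedness of the branching estimator (PDE1 case): with `τ` the default
time, `ν t y` the law of `X_T` given `X_t = y`, and the estimator that outputs
`ψ(X_T)` if `τ ≥ T` and otherwise draws `K = k` with probability `p_k` and outputs
`(a_K/p_K) ∏_{j=1}^K ψ(X_T^{(j)})` with i.i.d. copies, the expectation of the estimator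
equals `E[1_{τ≥T} ψ(X_T)] + E[1_{τ<T} F(E_{τ,X_τ}[ψ(X_T)])]` where `F(m) = ∑ a_k m^k`. -/
theorem stmt_19 {Ω E : Type*} [MeasurableSpace Ω] [MeasurableSpace E]
    (μ : Measure Ω) [IsProbabilityMeasure μ]
    (M : ℕ) (T : ℝ) (a p : Fin (M + 1) → ℝ)
    (hp : ∀ k, 0 ≤ p k) (hp1 : ∑ k, p k = 1) (hpa : ∀ k, a k ≠ 0 → 0 < p k)
    (τ : Ω → ℝ) (XT Xτ : Ω → E)
    (ν : ℝ → E → Measure E) (hν : ∀ t y, IsProbabilityMeasure (ν t y))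
    [inst : ∀ t y, SigmaFinite (ν t y)]
    (ψ : E → ℝ) (hψmeas : Measurable ψ) (Cψ : ℝ) (hψ : ∀ y, |ψ y| ≤ Cψ)
    (hInt0 : Integrable (fun ω => if T ≤ τ ω then ψ (XT ω)
      else ∑ k, p k * ((a k / p k) *
        ∫ z : Fin (k : ℕ) → E, ∏ j, ψ (z j)
          ∂(Measure.pi fun _ => ν (τ ω) (Xτ ω)))) μ)
    (hInt1 : Integrable (fun ω => if T ≤ τ ω then ψ (XT ω) else 0) μ)
    (hInt2 : Integrable (fun ω => if τ ω < T then
        ∑ k, a k * (∫ y, ψ y ∂(ν (τ ω) (Xτ ω))) ^ (k : ℕ) else 0) μ) :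
    ∫ ω, (if T ≤ τ ω then ψ (XT ω)
        else ∑ k, p k * ((a k / p k) *
          ∫ z : Fin (k : ℕ) → E, ∏ j, ψ (z j)
            ∂(Measure.pi fun _ => ν (τ ω) (Xτ ω)))) ∂μ
      = (∫ ω, (if T ≤ τ ω then ψ (XT ω) else 0) ∂μ)
        + ∫ ω, (if τ ω < T then
            ∑ k, a k * (∫ y, ψ y ∂(ν (τ ω) (Xτ ω))) ^ (k : ℕ) else 0) ∂μ :=
  stmt_19_general μ M T a p hpa τ XT Xτ ν (inst := inst) ψ hInt1 hInt2
end
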